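/- arXiv:1409.4633 — 2 statements merged into one kernel-verified Lean document; each statement's English description precedes it below -/
import Mathlib

section
/- Coupled two-function iteration. For every C₂ > 0 there is a constant K = K(C₂) > 0 with the following property. Let 0 < ρ < R and μ₁ > 0 with C₂μ₁ ≤ 1/2. Let H, B₀, B₁, G : [ρ,R] → [0,∞) be bounded functions with H, B₀ and G nondecreasing, and suppose that for all ρ ≤ s < t ≤ R: (i) B₁(s) ≤ μ₁ [ H(t) + B₀(t) + (t−s)^{−2} G(t) ], and (ii) H(s) ≤ C₂ B₁(t) + C₂ B₀(t) + (t−s)^{−2} G(t). Then for all ρ ≤ s < t ≤ R: H(s) ≤ K [ B₀(t) + (t−s)^{−2} G(t) ] and B₁(s) ≤ K μ₁ B₀(t) + K (t−s)^{−2} G(t). -/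
set_option maxHeartbeats 1000000 in
/-- Coupled two-function iteration: from `B₁(s) ≤ μ₁[H(t)+B₀(t)+(t−s)⁻²G(t)]` and
`H(s) ≤ C₂B₁(t)+C₂B₀(t)+(t−s)⁻²G(t)` with `C₂μ₁ ≤ 1/2`, one gets
`H(s) ≤ K[B₀(t)+(t−s)⁻²G(t)]` and `B₁(s) ≤ Kμ₁B₀(t)+K(t−s)⁻²G(t)`. -/
theorem coupled_iteration (C₂ : ℝ) (hC₂ : 0 < C₂) :
    ∃ K > 0, ∀ ρ R μ₁ : ℝ, 0 < ρ → ρ < R → 0 < μ₁ → C₂ * μ₁ ≤ 1 / 2 →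
      ∀ H B₀ B₁ G : ℝ → ℝ,
        (∀ x ∈ Set.Icc ρ R, 0 ≤ H x) → (∀ x ∈ Set.Icc ρ R, 0 ≤ B₀ x) →
        (∀ x ∈ Set.Icc ρ R, 0 ≤ B₁ x) → (∀ x ∈ Set.Icc ρ R, 0 ≤ G x) →
        (∃ K', ∀ x ∈ Set.Icc ρ R, H x ≤ K' ∧ B₀ x ≤ K' ∧ B₁ x ≤ K' ∧ G x ≤ K') →
        MonotoneOn H (Set.Icc ρ R) → MonotoneOn B₀ (Set.Icc ρ R) →
        MonotoneOn G (Set.Icc ρ R) →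
        (∀ s t : ℝ, ρ ≤ s → s < t → t ≤ R →
          B₁ s ≤ μ₁ * (H t + B₀ t + ((t - s) ^ 2)⁻¹ * G t)) →
        (∀ s t : ℝ, ρ ≤ s → s < t → t ≤ R →
          H s ≤ C₂ * B₁ t + C₂ * B₀ t + ((t - s) ^ 2)⁻¹ * G t) →
        ∀ s t : ℝ, ρ ≤ s → s < t → t ≤ R →
          H s ≤ K * (B₀ t + ((t - s) ^ 2)⁻¹ * G t) ∧
          B₁ s ≤ K * μ₁ * B₀ t + K * ((t - s) ^ 2)⁻¹ * G t := by
  set A : ℝ := C₂ + 6 with hA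
  have hApos : 0 < A := by positivity
  set K₀ : ℝ := 120 * A with hK₀
  have hK₀pos : 0 < K₀ := by positivity
  clear_value A K₀
  refine ⟨K₀ + 1 + (2 * K₀ + 2) / C₂, by positivity, ?_⟩
  intro ρ R μ₁ hρ hρR hμ₁ hCμ H B₀ B₁ G hH0 hB₀0 hB₁0 hG0 hbdd hHm hB₀m hGm hB₁i hHi
  obtain ⟨K', hK'⟩ := hbdd
  -- one-step lemma
  have step : ∀ s t : ℝ, ρ ≤ s → s < t → t ≤ R →
      H s ≤ (1/2) * H t + A * (B₀ t + ((t - s) ^ 2)⁻¹ * G t) := by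
    intro s t hs hst htR
    set u : ℝ := (s + t) / 2 with hu
    have hsu : s < u := by simp [hu]; linarith
    have hut : u < t := by simp [hu]; linarith
    have hts : 0 < t - s := by linarith
    have hX : (0:ℝ) < ((t - s) ^ 2)⁻¹ := by positivity
    have h1 := hHi s u hs hsu (by linarith)
    have h2 := hB₁i u t (by linarith) hut htR
    have humem : u ∈ Set.Icc ρ R := ⟨by linarith, by linarith⟩
    have htmem : t ∈ Set.Icc ρ R := ⟨by linarith, htR⟩
    have hB₀u : B₀ u ≤ B₀ t := hB₀m humem htmem hut.le
    have hGu : G u ≤ G t := hGm humem htmem hut.le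
    have hinv1 : ((u - s) ^ 2)⁻¹ = 4 * ((t - s) ^ 2)⁻¹ := by
      have h : u - s = (t - s) / 2 := by simp [hu]; ring
      rw [h]
      field_simp <;> norm_num
    have hinv2 : ((t - u) ^ 2)⁻¹ = 4 * ((t - s) ^ 2)⁻¹ := by
      have h : t - u = (t - s) / 2 := by simp [hu]; ring
      rw [h]
      field_simp <;> norm_num
    rw [hinv2] at h2
    rw [hinv1] at h1
    have e1 : C₂ * B₁ u ≤ C₂ * (μ₁ * (H t + B₀ t + 4 * ((t - s) ^ 2)⁻¹ * G t)) :=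
      mul_le_mul_of_nonneg_left h2 hC₂.le
    have hHt0 : 0 ≤ H t := hH0 t htmem
    have hB₀t0 : 0 ≤ B₀ t := hB₀0 t htmem
    have hGt0 : 0 ≤ G t := hG0 t htmem
    have hsum0 : 0 ≤ H t + B₀ t + 4 * ((t - s) ^ 2)⁻¹ * G t := by positivity
    have e2 : C₂ * μ₁ * (H t + B₀ t + 4 * ((t - s) ^ 2)⁻¹ * G t)
        ≤ (1/2) * (H t + B₀ t + 4 * ((t - s) ^ 2)⁻¹ * G t) :=
      mul_le_mul_of_nonneg_right hCμ hsum0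
    have e3 : C₂ * B₀ u ≤ C₂ * B₀ t := mul_le_mul_of_nonneg_left hB₀u hC₂.le
    have e4 : 4 * ((t - s) ^ 2)⁻¹ * G u ≤ 4 * ((t - s) ^ 2)⁻¹ * G t := by
      apply mul_le_mul_of_nonneg_left hGu; positivity
    nlinarith [mul_nonneg hX.le hGt0, mul_nonneg hC₂.le hB₀t0,
      mul_nonneg hC₂.le (mul_nonneg hX.le hGt0)]
  -- iterated bound
  have main : ∀ N : ℕ, ∀ s t : ℝ, ρ ≤ s → s < t → t ≤ R →
      H s ≤ (1/2) ^ N * H t + K₀ * (B₀ t + ((t - s) ^ 2)⁻¹ * G t) := by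
    intro N
    induction N with
    | zero =>
      intro s t hs hst htR
      have hsmem : s ∈ Set.Icc ρ R := ⟨hs, by linarith⟩
      have htmem : t ∈ Set.Icc ρ R := ⟨by linarith, htR⟩
      have h1 : H s ≤ H t := hHm hsmem htmem hst.le
      have hts : 0 < t - s := by linarith
      have hX : (0:ℝ) < ((t - s) ^ 2)⁻¹ := by positivity
      have hB₀t0 : 0 ≤ B₀ t := hB₀0 t htmem
      have hGt0 : 0 ≤ G t := hG0 t htmem
      have : 0 ≤ K₀ * (B₀ t + ((t - s) ^ 2)⁻¹ * G t) := by positivity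
      simpa using by linarith
    | succ N ih =>
      intro s t hs hst htR
      set u : ℝ := s + (t - s) / 5 with hu
      have hts : 0 < t - s := by linarith
      have hsu : s < u := by simp [hu]; linarith
      have hut : u < t := by simp [hu]; linarith
      have hX : (0:ℝ) < ((t - s) ^ 2)⁻¹ := by positivity
      have h1 := step s u hs hsu (by linarith)
      have h2 := ih u t (by linarith) hut htR
      have humem : u ∈ Set.Icc ρ R := ⟨by linarith, by linarith⟩
      have htmem : t ∈ Set.Icc ρ R := ⟨by linarith, htR⟩
      have hB₀u : B₀ u ≤ B₀ t := hB₀m humem htmem hut.le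
      have hGu : G u ≤ G t := hGm humem htmem hut.le
      have hinv1 : ((u - s) ^ 2)⁻¹ = 25 * ((t - s) ^ 2)⁻¹ := by
        have h : u - s = (t - s) / 5 := by simp [hu]
        rw [h]
        field_simp <;> norm_num
      have hinv2 : ((t - u) ^ 2)⁻¹ = (25/16) * ((t - s) ^ 2)⁻¹ := by
        have h : t - u = (t - s) * (4/5) := by simp [hu]; ring
        rw [h]
        rw [mul_pow]
        rw [mul_inv]
        norm_num
        ring
      rw [hinv1] at h1
      rw [hinv2] at h2
      have hB₀t0 : 0 ≤ B₀ t := hB₀0 t htmem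
      have hGt0 : 0 ≤ G t := hG0 t htmem
      have hpowpos : (0:ℝ) < (1/2) ^ N := by positivity
      -- combine
      have e4 : A * (25 * ((t - s) ^ 2)⁻¹) * G u ≤ A * (25 * ((t - s) ^ 2)⁻¹) * G t := by
        apply mul_le_mul_of_nonneg_left hGu; positivity
      have e5 : A * B₀ u ≤ A * B₀ t := mul_le_mul_of_nonneg_left hB₀u hApos.le
      have e6 : (1/2) * H u ≤ (1/2) * ((1/2) ^ N * H t
          + K₀ * (B₀ t + (25/16) * ((t - s) ^ 2)⁻¹ * G t)) := by linarith
      have hXG : 0 ≤ ((t - s) ^ 2)⁻¹ * G t := by positivity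
      have : H s ≤ (1/2) * ((1/2) ^ N * H t)
          + (K₀/2 + A) * B₀ t + ((25/32) * K₀ + 25 * A) * (((t - s) ^ 2)⁻¹ * G t) := by
        linarith
      calc H s ≤ (1/2) * ((1/2) ^ N * H t)
          + (K₀/2 + A) * B₀ t + ((25/32) * K₀ + 25 * A) * (((t - s) ^ 2)⁻¹ * G t) := this
        _ ≤ (1/2) ^ (N+1) * H t + K₀ * (B₀ t + ((t - s) ^ 2)⁻¹ * G t) := by
            rw [pow_succ (1/2 : ℝ) N]
            have c1 : (K₀/2 + A) ≤ K₀ := by rw [hK₀]; linarith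
            have c2 : ((25/32) * K₀ + 25 * A) ≤ K₀ := by rw [hK₀]; linarith
            linarith [mul_le_mul_of_nonneg_right c1 hB₀t0,
              mul_le_mul_of_nonneg_right c2 hXG]
  -- limit bound for H
  have Hbound : ∀ s t : ℝ, ρ ≤ s → s < t → t ≤ R →
      H s ≤ K₀ * (B₀ t + ((t - s) ^ 2)⁻¹ * G t) := by
    intro s t hs hst htR
    have htmem : t ∈ Set.Icc ρ R := ⟨by linarith, htR⟩
    have hHtK' : H t ≤ K' := (hK' t htmem).1
    have hHt0 : 0 ≤ H t := hH0 t htmem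
    have hall : ∀ N : ℕ, H s ≤ (1/2) ^ N * K' + K₀ * (B₀ t + ((t - s) ^ 2)⁻¹ * G t) := by
      intro N
      have hm := main N s t hs hst htR
      have hp : (0:ℝ) ≤ (1/2) ^ N := by positivity
      linarith [mul_le_mul_of_nonneg_left hHtK' hp]
    have htend : Filter.Tendsto
        (fun N : ℕ => (1/2:ℝ) ^ N * K' + K₀ * (B₀ t + ((t - s) ^ 2)⁻¹ * G t))
        Filter.atTop (nhds (0 * K' + K₀ * (B₀ t + ((t - s) ^ 2)⁻¹ * G t))) := by
      exact (((tendsto_pow_atTop_nhds_zero_of_lt_one (by norm_num) (by norm_num)).mul_const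
        K').add_const _)
    have := ge_of_tendsto' htend hall
    linarith [this]
  -- conclude
  intro s t hs hst htR
  have hts : 0 < t - s := by linarith
  have hX : (0:ℝ) < ((t - s) ^ 2)⁻¹ := by positivity
  have htmem : t ∈ Set.Icc ρ R := ⟨by linarith, htR⟩
  have hB₀t0 : 0 ≤ B₀ t := hB₀0 t htmem
  have hGt0 : 0 ≤ G t := hG0 t htmem
  have hKge : K₀ ≤ K₀ + 1 + (2 * K₀ + 2) / C₂ := by
    have : 0 < (2 * K₀ + 2) / C₂ := by positivity
    linarith
  constructor
  · have h := Hbound s t hs hst htR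
    have hnn : 0 ≤ B₀ t + ((t - s) ^ 2)⁻¹ * G t := by positivity
    calc H s ≤ K₀ * (B₀ t + ((t - s) ^ 2)⁻¹ * G t) := h
      _ ≤ (K₀ + 1 + (2 * K₀ + 2) / C₂) * (B₀ t + ((t - s) ^ 2)⁻¹ * G t) :=
        mul_le_mul_of_nonneg_right hKge hnn
  · -- B₁ bound via midpoint
    set u : ℝ := (s + t) / 2 with hu
    have hsu : s < u := by simp [hu]; linarith
    have hut : u < t := by simp [hu]; linarith
    have h2 := hB₁i s u hs hsu (by linarith)
    have hH := Hbound u t (by linarith) hut htR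
    have humem : u ∈ Set.Icc ρ R := ⟨by linarith, by linarith⟩
    have hB₀u : B₀ u ≤ B₀ t := hB₀m humem htmem hut.le
    have hGu : G u ≤ G t := hGm humem htmem hut.le
    have hinv1 : ((u - s) ^ 2)⁻¹ = 4 * ((t - s) ^ 2)⁻¹ := by
      have h : u - s = (t - s) / 2 := by simp [hu]; ring
      rw [h]; field_simp <;> norm_num
    have hinv2 : ((t - u) ^ 2)⁻¹ = 4 * ((t - s) ^ 2)⁻¹ := by
      have h : t - u = (t - s) / 2 := by simp [hu]; ring
      rw [h]; field_simp <;> norm_num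
    rw [hinv1] at h2
    rw [hinv2] at hH
    -- B₁ s ≤ μ₁ * (H u + B₀ u + 4X G u)
    have hμC : μ₁ ≤ 1 / (2 * C₂) := by
      rw [le_div_iff₀ (by positivity)]
      nlinarith
    -- H u ≤ K₀ B₀ t + 4 K₀ X G t
    have key : B₁ s ≤ μ₁ * ((K₀ + 1) * B₀ t + (4 * K₀ + 4) * (((t - s) ^ 2)⁻¹ * G t)) := by
      have hmul : μ₁ * (H u + B₀ u + 4 * ((t - s) ^ 2)⁻¹ * G u)
          ≤ μ₁ * ((K₀ + 1) * B₀ t + (4 * K₀ + 4) * (((t - s) ^ 2)⁻¹ * G t)) := by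
        apply mul_le_mul_of_nonneg_left _ hμ₁.le
        nlinarith [mul_nonneg hX.le hGt0]
      linarith
    have hXGnn : 0 ≤ ((t - s) ^ 2)⁻¹ * G t := by positivity
    have split1 : μ₁ * ((K₀ + 1) * B₀ t) ≤ (K₀ + 1 + (2 * K₀ + 2) / C₂) * μ₁ * B₀ t := by
      have : 0 ≤ (2 * K₀ + 2) / C₂ := by positivity
      nlinarith [mul_nonneg hμ₁.le hB₀t0]
    have split2 : μ₁ * ((4 * K₀ + 4) * (((t - s) ^ 2)⁻¹ * G t))
        ≤ (K₀ + 1 + (2 * K₀ + 2) / C₂) * (((t - s) ^ 2)⁻¹ * G t) := by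
      have h1 : μ₁ * (4 * K₀ + 4) ≤ (2 * K₀ + 2) / C₂ := by
        rw [div_eq_mul_inv]
        have : μ₁ ≤ 1 / (2 * C₂) := hμC
        rw [div_eq_mul_inv, one_mul] at this
        have h2 : μ₁ * (4 * K₀ + 4) ≤ (2 * C₂)⁻¹ * (4 * K₀ + 4) :=
          mul_le_mul_of_nonneg_right this (by positivity)
        calc μ₁ * (4 * K₀ + 4) ≤ (2 * C₂)⁻¹ * (4 * K₀ + 4) := h2
          _ = (2 * K₀ + 2) * C₂⁻¹ := by
              rw [mul_inv]
              ring
      have h3 : 0 ≤ K₀ + 1 := by linarith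
      calc μ₁ * ((4 * K₀ + 4) * (((t - s) ^ 2)⁻¹ * G t))
          = (μ₁ * (4 * K₀ + 4)) * (((t - s) ^ 2)⁻¹ * G t) := by ring
        _ ≤ ((2 * K₀ + 2) / C₂) * (((t - s) ^ 2)⁻¹ * G t) :=
            mul_le_mul_of_nonneg_right h1 hXGnn
        _ ≤ (K₀ + 1 + (2 * K₀ + 2) / C₂) * (((t - s) ^ 2)⁻¹ * G t) := by
            apply mul_le_mul_of_nonneg_right _ hXGnn
            linarith
    calc B₁ s ≤ μ₁ * ((K₀ + 1) * B₀ t + (4 * K₀ + 4) * (((t - s) ^ 2)⁻¹ * G t)) := key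
      _ = μ₁ * ((K₀ + 1) * B₀ t) + μ₁ * ((4 * K₀ + 4) * (((t - s) ^ 2)⁻¹ * G t)) := by ring
      _ ≤ (K₀ + 1 + (2 * K₀ + 2) / C₂) * μ₁ * B₀ t
          + (K₀ + 1 + (2 * K₀ + 2) / C₂) * ((t - s) ^ 2)⁻¹ * G t := by
          have := split2
          rw [mul_assoc ((K₀ + 1 + (2 * K₀ + 2) / C₂)) (((t - s) ^ 2)⁻¹) (G t)]
          linarith [split1]
end

section
/- Ellipticity ratio inequality. Let n, m ≥ 1 be integers and let M = ℝ^{n×m} be the space of real n×m matrices with the Frobenius inner product ⟨·,·⟩ and norm |·|. Let λ, Λ > 0, let α ≥ 0 and δ ∈ (0,1) satisfy α/(2+α) = δ λ/Λ, and let A : M → M be a symmetric linear map with λ|ξ|² ≤ ⟨Aξ, ξ⟩ ≤ Λ|ξ|² for all ξ ∈ M. Then for every nonzero z ∈ ℝ^m and every P ∈ M, ⟨A P, |z|^α P + α |z|^{α−2} (Pz) ⊗ z⟩ ≥ (1−δ²) λ |z|^α |P|², where (Pz) ⊗ z denotes the n×m matrix with entries ((Pz) ⊗ z)_{ij} = (Pz)_i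 z_j and (Pz)_i = Σ_{k=1}^m P_{ik} z_k. (This is the pointwise form of the inequality A Dζ · D(ζ|ζ|^α) ≥ (1−δ²) λ |ζ|^α |Dζ|² for vector-valued ζ, with P playing the role of Dζ and z the role of ζ.) -/
/-!
Let `Q` be the orthogonal projection of `P` onto the matrices of the form `v ⊗ z`, so that the
integrand is `|z|^α ⟨A P, P + α Q⟩`. Since `A` is symmetric,
`⟨A P, P + α Q⟩ = ⟨A W, W⟩ - (α/2)² ⟨A Q, Q⟩` with `W = P + (α/2) Q`, and
`|W|² = |P|² + (α + α²/4) |Q|²` by orthogonality. Bounding `⟨A W, W⟩` below by `λ|W|²` and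
`⟨A Q, Q⟩` above by `Λ|Q|²`, the ratio condition gives `Λ α² ≤ δ² λ (2 + α)²`, and with
`|Q| ≤ |P|` the total loss is at most `δ² λ |P|²`.
-/

open RealInnerProductSpace Finset

section InnerProductSpace

variable {E : Type*} [NormedAddCommGroup E] [InnerProductSpace ℝ E]

theorem LinearMap.IsSymmetric.inner_map_self_add_two_smul {A : E →ₗ[ℝ] E} (hA : A.IsSymmetric)
    (c : ℝ) (P Q : E) :
    ⟪A P, P + (2 * c) • Q⟫ = ⟪A (P + c • Q), P + c • Q⟫ - c ^ 2 * ⟪A Q, Q⟫ := by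
  have hQP : ⟪A Q, P⟫ = ⟪A P, Q⟫ := by rw [hA, real_inner_comm]
  simp only [map_add, map_smul, inner_add_left, inner_add_right, inner_smul_left,
    inner_smul_right, hQP, RCLike.conj_to_real]
  ring

theorem norm_add_smul_sq_of_inner_sub_eq_zero {P Q : E} (hPQ : ⟪P - Q, Q⟫ = 0) (c : ℝ) :
    ‖P + c • Q‖ ^ 2 = ‖P‖ ^ 2 + (2 * c + c ^ 2) * ‖Q‖ ^ 2 := by
  rw [inner_sub_left, real_inner_self_eq_norm_sq, sub_eq_zero] at hPQ
  rw [norm_add_sq_real, inner_smul_right, norm_smul, mul_pow, Real.norm_eq_abs, sq_abs, hPQ]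
  ring

theorem norm_le_of_inner_sub_eq_zero {P Q : E} (hPQ : ⟪P - Q, Q⟫ = 0) : ‖Q‖ ≤ ‖P‖ := by
  have h := norm_add_sq_eq_norm_sq_add_norm_sq_real (real_inner_comm Q (P - Q) ▸ hPQ)
  rw [add_sub_cancel] at h
  nlinarith [norm_nonneg (P - Q), norm_nonneg P, norm_nonneg Q]

theorem mul_sq_le_of_div_eq_mul_div {lam Lam α δ q : ℝ} (hlam : 0 ≤ lam) (hLam : 0 < Lam)
    (hα : 0 ≤ α) (hratio : α / (2 + α) = δ * (lam / Lam)) (hq : lam * q ≤ Lam * q) :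
    Lam * α ^ 2 * q ≤ δ ^ 2 * lam * (2 + α) ^ 2 * q := by
  have hαLam : α * Lam = δ * lam * (2 + α) := by
    field_simp at hratio
    linarith
  refine le_of_mul_le_mul_left ?_ hLam
  have h := mul_le_mul_of_nonneg_left hq (by positivity : 0 ≤ δ ^ 2 * lam * (2 + α) ^ 2)
  linear_combination q * congrArg (· ^ 2) hαLam + h

theorem le_inner_map_self_add_smul {A : E →ₗ[ℝ] E} (hA : A.IsSymmetric)
    {lam Lam α δ : ℝ} (hlam : 0 ≤ lam) (hLam : 0 < Lam) (hα : 0 ≤ α) (hδ0 : 0 < δ) (hδ1 : δ < 1)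
    (hratio : α / (2 + α) = δ * (lam / Lam))
    (hlow : ∀ ξ, lam * ‖ξ‖ ^ 2 ≤ ⟪A ξ, ξ⟫) (hup : ∀ ξ, ⟪A ξ, ξ⟫ ≤ Lam * ‖ξ‖ ^ 2)
    {P Q : E} (hPQ : ⟪P - Q, Q⟫ = 0) :
    (1 - δ ^ 2) * lam * ‖P‖ ^ 2 ≤ ⟪A P, P + α • Q⟫ := by
  have hQP : ‖Q‖ ^ 2 ≤ ‖P‖ ^ 2 := by gcongr; exact norm_le_of_inner_sub_eq_zero hPQ
  have hW := hlow (P + (α / 2) • Q)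
  rw [norm_add_smul_sq_of_inner_sub_eq_zero hPQ] at hW
  have hAQ : (α / 2) ^ 2 * ⟪A Q, Q⟫ ≤ δ ^ 2 * lam * (1 + α / 2) ^ 2 * ‖Q‖ ^ 2 := by
    have := mul_sq_le_of_div_eq_mul_div hlam hLam hα hratio ((hlow Q).trans (hup Q))
    nlinarith [mul_le_mul_of_nonneg_left (hup Q) (sq_nonneg (α / 2))]
  have hδ : 0 ≤ 1 - δ ^ 2 := by nlinarith
  calc (1 - δ ^ 2) * lam * ‖P‖ ^ 2
      ≤ lam * (‖P‖ ^ 2 + (2 * (α / 2) + (α / 2) ^ 2) * ‖Q‖ ^ 2)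
          - δ ^ 2 * lam * (1 + α / 2) ^ 2 * ‖Q‖ ^ 2 := by
        nlinarith [mul_nonneg (mul_nonneg (mul_nonneg hlam (by positivity : 0 ≤ α + (α / 2) ^ 2))
          hδ) (sq_nonneg ‖Q‖), mul_le_mul_of_nonneg_left hQP (mul_nonneg (sq_nonneg δ) hlam)]
    _ ≤ ⟪A (P + (α / 2) • Q), P + (α / 2) • Q⟫ - (α / 2) ^ 2 * ⟪A Q, Q⟫ := by linarith
    _ = ⟪A P, P + α • Q⟫ := by
        rw [← hA.inner_map_self_add_two_smul, mul_div_cancel₀ α two_ne_zero]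

end InnerProductSpace

section Matrix

variable {ι κ : Type*} [Fintype ι] [Fintype κ]

def euclideanUncurry (ι κ : Type*) : (ι → κ → ℝ) ≃ₗ[ℝ] EuclideanSpace ℝ (ι × κ) :=
  ((WithLp.linearEquiv 2 ℝ (ι × κ → ℝ)).trans (LinearEquiv.curry ℝ ℝ ι κ)).symm

theorem inner_euclideanUncurry (ξ η : ι → κ → ℝ) :
    ⟪euclideanUncurry ι κ ξ, euclideanUncurry ι κ η⟫ = ∑ i, ∑ j, ξ i j * η i j := by
  simp [euclideanUncurry, PiLp.inner_apply, Fintype.sum_prod_type, mul_comm]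

theorem norm_euclideanUncurry_sq (ξ : ι → κ → ℝ) :
    ‖euclideanUncurry ι κ ξ‖ ^ 2 = ∑ i, ∑ j, ξ i j ^ 2 := by
  rw [← real_inner_self_eq_norm_sq, inner_euclideanUncurry]
  simp only [sq]

theorem inner_conj_euclideanUncurry (A : (ι → κ → ℝ) →ₗ[ℝ] (ι → κ → ℝ)) (ξ η : ι → κ → ℝ) :
    ⟪(euclideanUncurry ι κ).conj A (euclideanUncurry ι κ ξ), euclideanUncurry ι κ η⟫ =
      ∑ i, ∑ j, A ξ i j * η i j := by
  rw [LinearEquiv.conj_apply_apply, inner_euclideanUncurry, LinearEquiv.symm_apply_apply]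

theorem isSymmetric_conj_euclideanUncurry {A : (ι → κ → ℝ) →ₗ[ℝ] (ι → κ → ℝ)}
    (hA : ∀ ξ η : ι → κ → ℝ, ∑ i, ∑ j, A ξ i j * η i j = ∑ i, ∑ j, ξ i j * A η i j) :
    ((euclideanUncurry ι κ).conj A).IsSymmetric := by
  intro x y
  obtain ⟨ξ, rfl⟩ := (euclideanUncurry ι κ).surjective x
  obtain ⟨η, rfl⟩ := (euclideanUncurry ι κ).surjective y
  rw [inner_conj_euclideanUncurry, real_inner_comm, inner_conj_euclideanUncurry, hA]
  simp only [mul_comm]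

/-- `P ↦ P z zᵀ / |z|²`, the orthogonal projection onto the matrices `v ⊗ z`. -/
noncomputable def rowProj (z : κ → ℝ) (P : ι → κ → ℝ) : ι → κ → ℝ :=
  fun i j => (∑ l, P i l * z l) * z j / ∑ l, z l ^ 2

theorem sum_sub_rowProj_mul_rowProj (z : κ → ℝ) (P : ι → κ → ℝ) :
    ∑ i, ∑ j, (P i j - rowProj z P i j) * rowProj z P i j = 0 := by
  refine sum_eq_zero fun i _ => ?_
  set c := (∑ l, P i l * z l) / ∑ l, z l ^ 2 with hc
  have hQ : ∀ j, rowProj z P i j = c * z j := fun j => by simp only [rowProj, hc]; ring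
  calc ∑ j, (P i j - rowProj z P i j) * rowProj z P i j
      = c * ((∑ l, P i l * z l) - c * ∑ l, z l ^ 2) := by
        simp only [hQ, mul_sum, ← sum_sub_distrib]
        exact sum_congr rfl fun j _ => by ring
    _ = 0 := by
        rcases eq_or_ne (∑ l, z l ^ 2) 0 with hS | hS
        · simp [hc, hS]
        · rw [hc, div_mul_cancel₀ _ hS, sub_self, mul_zero]

theorem le_sum_mul_add_smul_rowProj {lam Lam α δ : ℝ} (hlam : 0 ≤ lam) (hLam : 0 < Lam)
    (hα : 0 ≤ α) (hδ0 : 0 < δ) (hδ1 : δ < 1) (hratio : α / (2 + α) = δ * (lam / Lam))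
    {A : (ι → κ → ℝ) →ₗ[ℝ] (ι → κ → ℝ)}
    (hsym : ∀ ξ η : ι → κ → ℝ, ∑ i, ∑ j, A ξ i j * η i j = ∑ i, ∑ j, ξ i j * A η i j)
    (hell : ∀ ξ : ι → κ → ℝ,
      lam * (∑ i, ∑ j, ξ i j ^ 2) ≤ (∑ i, ∑ j, A ξ i j * ξ i j) ∧
      (∑ i, ∑ j, A ξ i j * ξ i j) ≤ Lam * (∑ i, ∑ j, ξ i j ^ 2))
    (z : κ → ℝ) (P : ι → κ → ℝ) :
    (1 - δ ^ 2) * lam * ∑ i, ∑ j, P i j ^ 2 ≤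
      ∑ i, ∑ j, A P i j * (P + α • rowProj z P) i j := by
  set e := euclideanUncurry ι κ
  have key := le_inner_map_self_add_smul (isSymmetric_conj_euclideanUncurry hsym) hlam hLam
    hα hδ0 hδ1 hratio
    (e.surjective.forall.2 fun ξ => by
      rw [inner_conj_euclideanUncurry, norm_euclideanUncurry_sq]; exact (hell ξ).1)
    (e.surjective.forall.2 fun ξ => by
      rw [inner_conj_euclideanUncurry, norm_euclideanUncurry_sq]; exact (hell ξ).2)
    (P := e P) (Q := e (rowProj z P))
    (by rw [← map_sub, inner_euclideanUncurry]; exact sum_sub_rowProj_mul_rowProj z P)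
  rwa [← map_smul, ← map_add, inner_conj_euclideanUncurry, norm_euclideanUncurry_sq] at key

end Matrix

theorem ellipticity_ratio_general (n m : ℕ)
    (lam Lam : ℝ) (hlam : 0 < lam) (hLam : 0 < Lam)
    (α δ : ℝ) (hα : 0 ≤ α) (hδ0 : 0 < δ) (hδ1 : δ < 1)
    (hratio : α / (2 + α) = δ * (lam / Lam))
    (A : (Fin n → Fin m → ℝ) →ₗ[ℝ] (Fin n → Fin m → ℝ))
    (hsym : ∀ ξ η : Fin n → Fin m → ℝ,
      ∑ i, ∑ j, A ξ i j * η i j = ∑ i, ∑ j, ξ i j * A η i j)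
    (hell : ∀ ξ : Fin n → Fin m → ℝ,
      lam * (∑ i, ∑ j, ξ i j ^ 2) ≤ (∑ i, ∑ j, A ξ i j * ξ i j) ∧
      (∑ i, ∑ j, A ξ i j * ξ i j) ≤ Lam * (∑ i, ∑ j, ξ i j ^ 2))
    (z : Fin m → ℝ) (hz : z ≠ 0) (P : Fin n → Fin m → ℝ) :
    (1 - δ ^ 2) * lam * Real.sqrt (∑ l, z l ^ 2) ^ α * (∑ i, ∑ j, P i j ^ 2) ≤
      ∑ i, ∑ j, A P i j *
        (Real.sqrt (∑ l, z l ^ 2) ^ α * P i j +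
          α * Real.sqrt (∑ l, z l ^ 2) ^ (α - 2) * (∑ l, P i l * z l) * z j) := by
  set r := Real.sqrt (∑ l, z l ^ 2)
  have hr : 0 < r := by
    obtain ⟨l, hl⟩ := Function.ne_iff.mp hz
    exact Real.sqrt_pos.mpr
      (sum_pos' (fun l _ => sq_nonneg (z l)) ⟨l, mem_univ l, sq_pos_of_ne_zero hl⟩)
  have hr2 : r ^ 2 = ∑ l, z l ^ 2 := Real.sq_sqrt (sum_nonneg fun l _ => sq_nonneg (z l))
  have hpow : r ^ (α - 2) = r ^ α / r ^ 2 := by rw [Real.rpow_sub hr, Real.rpow_two]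
  calc (1 - δ ^ 2) * lam * r ^ α * ∑ i, ∑ j, P i j ^ 2
      ≤ r ^ α * ∑ i, ∑ j, A P i j * (P + α • rowProj z P) i j := by
        rw [mul_comm _ (r ^ α), mul_assoc]
        exact mul_le_mul_of_nonneg_left
          (le_sum_mul_add_smul_rowProj hlam.le hLam hα hδ0 hδ1 hratio hsym hell z P) (by positivity)
    _ = _ := by
        rw [mul_sum]
        refine sum_congr rfl fun i _ => ?_
        rw [mul_sum]
        refine sum_congr rfl fun j _ => ?_
        simp only [Pi.add_apply, Pi.smul_apply, smul_eq_mul, rowProj, hpow, ← hr2]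
        field_simp

/-- Ellipticity ratio inequality. With the Frobenius inner product
`⟨ξ, η⟩ = ∑ i ∑ j ξ i j * η i j` on `n × m` matrices (here `Fin n → Fin m → ℝ`), if `A` is a
symmetric linear map with `λ|ξ|² ≤ ⟨Aξ, ξ⟩ ≤ Λ|ξ|²`, `α ≥ 0`, `δ ∈ (0,1)` and
`α/(2+α) = δ λ/Λ`, then for every nonzero `z ∈ ℝ^m` and every matrix `P`,
`⟨A P, |z|^α P + α |z|^{α−2} (Pz) ⊗ z⟩ ≥ (1−δ²) λ |z|^α |P|²`. -/
theorem ellipticity_ratio (n m : ℕ) (hn : 1 ≤ n) (hm : 1 ≤ m)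
    (lam Lam : ℝ) (hlam : 0 < lam) (hLam : 0 < Lam)
    (α δ : ℝ) (hα : 0 ≤ α) (hδ0 : 0 < δ) (hδ1 : δ < 1)
    (hratio : α / (2 + α) = δ * (lam / Lam))
    (A : (Fin n → Fin m → ℝ) →ₗ[ℝ] (Fin n → Fin m → ℝ))
    (hsym : ∀ ξ η : Fin n → Fin m → ℝ,
      ∑ i, ∑ j, A ξ i j * η i j = ∑ i, ∑ j, ξ i j * A η i j)
    (hell : ∀ ξ : Fin n → Fin m → ℝ,
      lam * (∑ i, ∑ j, ξ i j ^ 2) ≤ (∑ i, ∑ j, A ξ i j * ξ i j) ∧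
      (∑ i, ∑ j, A ξ i j * ξ i j) ≤ Lam * (∑ i, ∑ j, ξ i j ^ 2))
    (z : Fin m → ℝ) (hz : z ≠ 0) (P : Fin n → Fin m → ℝ) :
    (1 - δ ^ 2) * lam * Real.sqrt (∑ l, z l ^ 2) ^ α * (∑ i, ∑ j, P i j ^ 2) ≤
      ∑ i, ∑ j, A P i j *
        (Real.sqrt (∑ l, z l ^ 2) ^ α * P i j +
          α * Real.sqrt (∑ l, z l ^ 2) ^ (α - 2) * (∑ l, P i l * z l) * z j) :=
  ellipticity_ratio_general n m lam Lam hlam hLam α δ hα hδ0 hδ1 hratio A hsym hell z hz P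
end
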